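/- arXiv:2401.01064 — 2 statements merged into one kernel-verified Lean document; each statement's English description precedes it below -/
import Mathlib

section
/- Let H be a J×K real matrix with H H^T positive definite, ϖ a K×K real matrix, and t ∈ R^K. Then the quantity t^T H^T (H H^T)^{-1} H ϖ ϖ^T H^T (H(I_K + ϖϖ^T)H^T)^{-1} H t is nonnegative; moreover it is strictly positive whenever ϖ^T H^T (H H^T)^{-1} H t ≠ 0. -/
/-!
Write `S = H Hᵀ` and `M = (Hϖ)(Hϖ)ᵀ`, so that `H (I + ϖϖᵀ) Hᵀ = S + M` and the quantity is the
quadratic form of `S⁻¹ M (S + M)⁻¹` at `u = H t`. Substituting `u = (S + M) w` turns it into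
`wᵀ M w + (M w)ᵀ S⁻¹ (M w)`, a sum of two nonnegative terms, the second one positive unless
`M w = 0`. But `M w = 0` forces `u = S w`, i.e. `w = S⁻¹ u`, and then `(Hϖ)ᵀ S⁻¹ u = 0` because
`M` and `(Hϖ)ᵀ` have the same kernel.
-/

open Matrix

namespace Matrix

variable {n : Type*} [Fintype n]

theorem dotProduct_mulVec_transpose_mul_mul {m R : Type*} [Fintype m] [CommSemiring R]
    (A : Matrix m n R) (Q : Matrix m m R) (x : n → R) :
    x ⬝ᵥ ((Aᵀ * Q * A) *ᵥ x) = (A *ᵥ x) ⬝ᵥ (Q *ᵥ (A *ᵥ x)) := by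
  rw [Matrix.mul_assoc, ← mulVec_mulVec, dotProduct_mulVec, vecMul_transpose, mulVec_mulVec]

theorem mulVec_mul_transpose_eq_zero_iff {m R : Type*} [Fintype m] [Field R] [LinearOrder R]
    [IsStrictOrderedRing R] (B : Matrix n m R) (y : n → R) :
    (B * Bᵀ) *ᵥ y = 0 ↔ Bᵀ *ᵥ y = 0 := by
  simpa only [transpose_transpose, LinearMap.mem_ker, mulVecLin_apply] using
    SetLike.ext_iff.mp (ker_mulVecLin_transpose_mul_self Bᵀ) y

variable [DecidableEq n]

theorem dotProduct_inv_mul_mul_inv_add_mulVec {R : Type*} [CommRing R] {S M : Matrix n n R}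
    (hS : IsUnit S.det) (hSM : IsUnit (S + M).det) (hSsymm : S.IsSymm) (hMsymm : M.IsSymm)
    (w : n → R) :
    ((S + M) *ᵥ w) ⬝ᵥ ((S⁻¹ * M * (S + M)⁻¹) *ᵥ ((S + M) *ᵥ w))
      = w ⬝ᵥ (M *ᵥ w) + (M *ᵥ w) ⬝ᵥ (S⁻¹ *ᵥ (M *ᵥ w)) := by
  have hexpand : (S + M) * (S⁻¹ * M) = M + M * S⁻¹ * M := by
    rw [Matrix.add_mul, ← Matrix.mul_assoc, mul_nonsing_inv S hS, Matrix.one_mul,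
      Matrix.mul_assoc]
  have hcross : w ⬝ᵥ ((M * S⁻¹ * M) *ᵥ w) = (M *ᵥ w) ⬝ᵥ (S⁻¹ *ᵥ (M *ᵥ w)) := by
    simpa only [hMsymm.eq] using dotProduct_mulVec_transpose_mul_mul M S⁻¹ w
  rw [mulVec_mulVec, Matrix.mul_assoc, nonsing_inv_mul _ hSM, Matrix.mul_one, dotProduct_comm,
    ← (hSsymm.add hMsymm).eq, dotProduct_transpose_mulVec, mulVec_mulVec, hexpand, add_mulVec,
    dotProduct_add, hcross]

variable {S M : Matrix n n ℝ}

theorem PosDef.dotProduct_inv_mul_mul_inv_add_mulVec (hS : S.PosDef) (hM : M.PosSemidef)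
    (w : n → ℝ) :
    ((S + M) *ᵥ w) ⬝ᵥ ((S⁻¹ * M * (S + M)⁻¹) *ᵥ ((S + M) *ᵥ w))
      = w ⬝ᵥ (M *ᵥ w) + (M *ᵥ w) ⬝ᵥ (S⁻¹ *ᵥ (M *ᵥ w)) :=
  Matrix.dotProduct_inv_mul_mul_inv_add_mulVec ((isUnit_iff_isUnit_det S).mp hS.isUnit)
    ((isUnit_iff_isUnit_det _).mp (hS.add_posSemidef hM).isUnit)
    (isHermitian_iff_isSymm.mp hS.isHermitian) (isHermitian_iff_isSymm.mp hM.isHermitian) w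

theorem PosDef.dotProduct_inv_mul_mul_inv_add_mulVec_nonneg (hS : S.PosDef) (hM : M.PosSemidef)
    (u : n → ℝ) : 0 ≤ u ⬝ᵥ ((S⁻¹ * M * (S + M)⁻¹) *ᵥ u) := by
  obtain ⟨w, rfl⟩ := mulVec_surjective_iff_isUnit.mpr (hS.add_posSemidef hM).isUnit u
  have hMw : 0 ≤ w ⬝ᵥ (M *ᵥ w) := by
    simpa only [star_trivial] using hM.dotProduct_mulVec_nonneg w
  have hSMw : 0 ≤ (M *ᵥ w) ⬝ᵥ (S⁻¹ *ᵥ (M *ᵥ w)) := by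
    simpa only [star_trivial] using hS.inv.posSemidef.dotProduct_mulVec_nonneg (M *ᵥ w)
  rw [hS.dotProduct_inv_mul_mul_inv_add_mulVec hM]
  positivity

theorem PosDef.dotProduct_inv_mul_mul_inv_add_mulVec_pos (hS : S.PosDef) (hM : M.PosSemidef)
    {u : n → ℝ} (hu : M *ᵥ (S⁻¹ *ᵥ u) ≠ 0) : 0 < u ⬝ᵥ ((S⁻¹ * M * (S + M)⁻¹) *ᵥ u) := by
  obtain ⟨w, rfl⟩ := mulVec_surjective_iff_isUnit.mpr (hS.add_posSemidef hM).isUnit u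
  have hMw_ne : M *ᵥ w ≠ 0 := by
    contrapose! hu
    rw [add_mulVec, hu, add_zero, mulVec_mulVec w S⁻¹ S,
      nonsing_inv_mul _ ((isUnit_iff_isUnit_det S).mp hS.isUnit), one_mulVec, hu]
  have hMw : 0 ≤ w ⬝ᵥ (M *ᵥ w) := by
    simpa only [star_trivial] using hM.dotProduct_mulVec_nonneg w
  have hSMw : 0 < (M *ᵥ w) ⬝ᵥ (S⁻¹ *ᵥ (M *ᵥ w)) := by
    simpa only [star_trivial] using hS.inv.dotProduct_mulVec_pos hMw_ne
  rw [hS.dotProduct_inv_mul_mul_inv_add_mulVec hM]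
  positivity

end Matrix

/-- Nonnegativity (and strict positivity on a nondegeneracy condition) of the
variance-enlargement term `tᵀ Hᵀ (HHᵀ)⁻¹ H ϖ ϖᵀ Hᵀ (H(I+ϖϖᵀ)Hᵀ)⁻¹ H t`. -/
theorem vee_term_nonneg (J K : ℕ)
    (H : Matrix (Fin J) (Fin K) ℝ) (ϖ : Matrix (Fin K) (Fin K) ℝ) (t : Fin K → ℝ)
    (hpd : (H * Hᵀ).PosDef) :
    0 ≤ t ⬝ᵥ ((Hᵀ * (H * Hᵀ)⁻¹ * H * ϖ * ϖᵀ * Hᵀ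
          * (H * (1 + ϖ * ϖᵀ) * Hᵀ)⁻¹ * H) *ᵥ t)
    ∧ ((ϖᵀ * Hᵀ * (H * Hᵀ)⁻¹ * H) *ᵥ t ≠ 0 →
        0 < t ⬝ᵥ ((Hᵀ * (H * Hᵀ)⁻¹ * H * ϖ * ϖᵀ * Hᵀ
          * (H * (1 + ϖ * ϖᵀ) * Hᵀ)⁻¹ * H) *ᵥ t)) := by
  have hM : (H * ϖ * (H * ϖ)ᵀ).PosSemidef := by
    simpa only [conjTranspose_eq_transpose_of_trivial] using
      posSemidef_self_mul_conjTranspose (H * ϖ)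
  have hform : Hᵀ * (H * Hᵀ)⁻¹ * H * ϖ * ϖᵀ * Hᵀ * (H * (1 + ϖ * ϖᵀ) * Hᵀ)⁻¹ * H
      = Hᵀ * ((H * Hᵀ)⁻¹ * (H * ϖ * (H * ϖ)ᵀ) * (H * Hᵀ + H * ϖ * (H * ϖ)ᵀ)⁻¹) * H := by
    simp only [transpose_mul, Matrix.mul_add, Matrix.add_mul, Matrix.mul_one, Matrix.mul_assoc]
  have hcond : (ϖᵀ * Hᵀ * (H * Hᵀ)⁻¹ * H) *ᵥ t = (H * ϖ)ᵀ *ᵥ ((H * Hᵀ)⁻¹ *ᵥ (H *ᵥ t)) := by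
    simp only [transpose_mul, mulVec_mulVec, Matrix.mul_assoc]
  rw [hform, dotProduct_mulVec_transpose_mul_mul, hcond]
  exact ⟨hpd.dotProduct_inv_mul_mul_inv_add_mulVec_nonneg hM _, fun hv ↦
    hpd.dotProduct_inv_mul_mul_inv_add_mulVec_pos hM
      ((mulVec_mul_transpose_eq_zero_iff _ _).not.mpr hv)⟩
end

section
/- Let ρ and ρ_z be distinct real numbers and (v_t)_{t≥1} a real sequence. Define x_t by x_0 = 0, x_t = ρ x_{t−1} + v_t, and define z_t by z_0 = 0, z_t = ρ_z z_{t−1} + (x_t − x_{t−1}). Then for all t ≥ 1, z_t = Σ_{j=1}^{t} c_{j,t} v_j, where c_{j,t} = (ρ_z^{t−j}(1 − ρ_z) − ρ^{t−j}(1 − ρ)) / (ρ − ρ_z). -/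
/-!
Both `x` and `z` solve zero-started first-order linear recursions, so each equals the moving
average of its innovations with geometric weights. The coefficients `c_k = c_{t-k,t}` satisfy
`c_0 = 1` and `c_{k+1} = ρ_z c_k + (ρ - 1) ρ^k`, which makes their moving average of `v` solve the
recursion of `z`, whose innovation is `Δx_t = v_t + (ρ - 1) x_{t-1}`; uniqueness of the solution
then identifies it with `z`.
-/

open Finset

section MovingAverage

variable {R : Type*} [CommRing R]

def maSum (c v : ℕ → R) (t : ℕ) : R :=
  ∑ j ∈ Icc 1 t, c (t - j) * v j

@[simp]
theorem maSum_zero (c v : ℕ → R) : maSum c v 0 = 0 := by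
  simp [maSum]

theorem maSum_succ (c v : ℕ → R) (t : ℕ) :
    maSum c v (t + 1) = c 0 * v (t + 1) + ∑ j ∈ Icc 1 t, c (t - j + 1) * v j := by
  rw [maSum, sum_Icc_succ_top (by omega), Nat.sub_self, add_comm]
  congr 1
  refine sum_congr rfl fun j hj => ?_
  rw [Nat.sub_add_comm (mem_Icc.mp hj).2]

theorem maSum_succ_of_coeff_succ {c b : ℕ → R} {a : R} (hc0 : c 0 = 1)
    (hc : ∀ k, c (k + 1) = a * c k + b k) (v : ℕ → R) (t : ℕ) :
    maSum c v (t + 1) = a * maSum c v t + v (t + 1) + maSum b v t := by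
  rw [maSum_succ, hc0, one_mul]
  simp only [hc, add_mul, sum_add_distrib, maSum, mul_sum, mul_assoc]
  ring

theorem maSum_const_mul (r : R) (c v : ℕ → R) (t : ℕ) :
    maSum (fun k => r * c k) v t = r * maSum c v t := by
  simp only [maSum, mul_sum, mul_assoc]

theorem eq_maSum_pow_of_recursion {a : R} {u y : ℕ → R} (h0 : y 0 = 0)
    (h : ∀ t, y (t + 1) = a * y t + u (t + 1)) (t : ℕ) :
    y t = maSum (a ^ ·) u t := by
  induction t with
  | zero => simp [h0]
  | succ t ih =>
    rw [h, ih, maSum_succ_of_coeff_succ (a := a) (b := 0) (pow_zero a)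
      (fun k => by simp [pow_succ'])]
    simp [maSum]

end MovingAverage

/-- The IVX coefficient `c_{j,t}` as a function of the lag `k = t - j`. -/
noncomputable def ivxCoeff (ρ ρz : ℝ) (k : ℕ) : ℝ :=
  (ρz ^ k * (1 - ρz) - ρ ^ k * (1 - ρ)) / (ρ - ρz)

theorem ivxCoeff_zero {ρ ρz : ℝ} (hne : ρ ≠ ρz) : ivxCoeff ρ ρz 0 = 1 := by
  rw [ivxCoeff, div_eq_one_iff_eq (sub_ne_zero.mpr hne)]
  ring

theorem ivxCoeff_succ {ρ ρz : ℝ} (hne : ρ ≠ ρz) (k : ℕ) :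
    ivxCoeff ρ ρz (k + 1) = ρz * ivxCoeff ρ ρz k + (ρ - 1) * ρ ^ k := by
  have hsub : ρ - ρz ≠ 0 := sub_ne_zero.mpr hne
  simp only [ivxCoeff]
  field_simp
  ring

/-- Closed-form moving-average representation of the IVX instrument:
`z_t = ∑_{j=1}^t c_{j,t} v_j` with
`c_{j,t} = (ρ_z^{t−j}(1−ρ_z) − ρ^{t−j}(1−ρ))/(ρ − ρ_z)`. -/
theorem ivx_instrument_ma_representation (ρ ρz : ℝ) (hne : ρ ≠ ρz)
    (v x z : ℕ → ℝ)
    (hx0 : x 0 = 0) (hx : ∀ t ≥ 1, x t = ρ * x (t - 1) + v t)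
    (hz0 : z 0 = 0) (hz : ∀ t ≥ 1, z t = ρz * z (t - 1) + (x t - x (t - 1))) :
    ∀ t ≥ 1,
      z t = ∑ j ∈ Finset.Icc 1 t,
        ((ρz ^ (t - j) * (1 - ρz) - ρ ^ (t - j) * (1 - ρ)) / (ρ - ρz)) * v j := by
  have hx_ma : x = maSum (ρ ^ ·) v :=
    funext <| eq_maSum_pow_of_recursion hx0 fun t => hx (t + 1) (by omega)
  have hz_ma : z = maSum (ρz ^ ·) (fun t => x t - x (t - 1)) :=
    funext <| eq_maSum_pow_of_recursion hz0 fun t => hz (t + 1) (by omega)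
  have hivx_ma : maSum (ivxCoeff ρ ρz) v = maSum (ρz ^ ·) (fun t => x t - x (t - 1)) := by
    refine funext <| eq_maSum_pow_of_recursion (maSum_zero _ _) fun t => ?_
    rw [maSum_succ_of_coeff_succ (ivxCoeff_zero hne) (ivxCoeff_succ hne), hx (t + 1) (by omega),
      maSum_const_mul, ← congrFun hx_ma t, Nat.add_sub_cancel]
    ring
  intro t _
  rw [hz_ma, ← hivx_ma]
  rfl
end
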